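/- Let Q be the canonical asymmetric BQS for an asymmetric fail-prone system F = [F_1,...,F_n] satisfying the B3-condition, i.e., each process p_i's quorum system is Q_i = { P \ F : F ∈ F_i }. Define the tolerated system T = { P \ G : G is a guild of Q for some faulty set }. Then T satisfies the Q3-condition: no three sets in T cover P. -/
import Mathlib


open Set

/-- Downward closure `A*`: all subsets of members of `A`. -/
def downClosure {α : Type*} (A : Set (Set α)) : Set (Set α) := {S | ∃ B ∈ A, S ⊆ B}

/-- The Q3-condition: no three members of `F` cover `P`. -/
def Q3cond {α : Type*} (P : Set α) (F : Set (Set α)) : Prop :=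
  ∀ A ∈ F, ∀ B ∈ F, ∀ C ∈ F, ¬ P ⊆ A ∪ B ∪ C

/-- The B3-condition for an asymmetric fail-prone system (processes = all of `α`). -/
def B3cond {α : Type*} (FF : α → Set (Set α)) : Prop :=
  ∀ i j, ∀ X ∈ FF i, ∀ Y ∈ FF j,
    ∀ Z ∈ downClosure (FF i) ∩ downClosure (FF j),
      ¬ (Set.univ : Set α) ⊆ X ∪ Y ∪ Z

/-- The canonical quorum system of process `i`: complements of its fail-prone sets. -/
def canonQ {α : Type*} (FF : α → Set (Set α)) (i : α) : Set (Set α) :=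
  {Q | ∃ X ∈ FF i, Q = Xᶜ}

/-- `G` is a (nonempty) guild of the canonical ABQS for faulty set `B`. -/
def IsGuild {α : Type*} (FF : α → Set (Set α)) (B G : Set α) : Prop :=
  G.Nonempty ∧ (∀ i ∈ G, B ∈ downClosure (FF i)) ∧
    (∀ i ∈ G, ∃ Q ∈ canonQ FF i, Q ⊆ G)

lemma guilds_intersect {α : Type*} (FF : α → Set (Set α)) (hB3 : B3cond FF)
    {B₁ G₁ B₂ G₂ : Set α} (h1 : IsGuild FF B₁ G₁) (h2 : IsGuild FF B₂ G₂) :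
    (G₁ ∩ G₂).Nonempty := by
  obtain ⟨⟨i, hi⟩, hw1, hq1⟩ := h1
  obtain ⟨⟨j, hj⟩, hw2, hq2⟩ := h2
  obtain ⟨Q1, ⟨X, hX, rfl⟩, hQ1⟩ := hq1 i hi
  obtain ⟨Q2, ⟨Y, hY, rfl⟩, hQ2⟩ := hq2 j hj
  by_contra h
  rw [Set.not_nonempty_iff_eq_empty] at h
  refine hB3 i j X hX Y hY ∅
    ⟨⟨X, hX, empty_subset _⟩, ⟨Y, hY, empty_subset _⟩⟩ ?_
  intro x _
  by_contra hx
  simp only [Set.mem_union, Set.mem_empty_iff_false, or_false, not_or] at hx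
  have : x ∈ G₁ ∩ G₂ := ⟨hQ1 hx.1, hQ2 hx.2⟩
  simp [h] at this

/-- the tolerated system of the canonical ABQS of a B3 asymmetric
fail-prone system satisfies the Q3-condition. -/
theorem stmt11 {α : Type*} (FF : α → Set (Set α)) (hB3 : B3cond FF) :
    Q3cond (Set.univ : Set α)
      {T | ∃ B G, IsGuild FF B G ∧ T = Gᶜ} := by
  rintro A ⟨B₁, G₁, hG1, rfl⟩ B ⟨B₂, G₂, hG2, rfl⟩ C ⟨B₃, G₃, hG3, rfl⟩ hcov
  obtain ⟨i, hi1, hi3⟩ := guilds_intersect FF hB3 hG1 hG3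
  obtain ⟨j, hj2, hj3⟩ := guilds_intersect FF hB3 hG2 hG3
  obtain ⟨Q1, ⟨X, hX, rfl⟩, hQ1⟩ := hG1.2.2 i hi1
  obtain ⟨Q2, ⟨Y, hY, rfl⟩, hQ2⟩ := hG2.2.2 j hj2
  obtain ⟨Q3, ⟨Z, hZ, rfl⟩, hQ3⟩ := hG3.2.2 i hi3
  obtain ⟨Q4, ⟨W, hW, rfl⟩, hQ4⟩ := hG3.2.2 j hj3
  have hZmem : G₃ᶜ ∈ downClosure (FF i) ∩ downClosure (FF j) :=
    ⟨⟨Z, hZ, compl_subset_comm.mpr hQ3⟩, ⟨W, hW, compl_subset_comm.mpr hQ4⟩⟩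
  refine hB3 i j X hX Y hY _ hZmem ?_
  intro x hx
  have := hcov hx
  simp only [Set.mem_union] at this ⊢
  rcases this with (h | h) | h
  · exact Or.inl (Or.inl (by_contra fun hxX => h (hQ1 hxX)))
  · exact Or.inl (Or.inr (by_contra fun hxY => h (hQ2 hxY)))
  · exact Or.inr h
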